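/- arXiv:1909.12896 — 2 statements merged into one kernel-verified Lean document; each statement's English description precedes it below -/
import Mathlib

section
/- Every convex integral polygon in ℝ² that contains a lattice point in its interior contains a convex integral subpolygon with an interior lattice point and at most four edges. -/
/-!
Steinitz's theorem in the plane, applied at an interior lattice point `x`. Interior points are
not extreme, so by Carathéodory `x` is a positive combination of affinely independent vertices
`zᵢ ≠ x`. If the `zᵢ - x` span the plane, these (at most three) vertices already work. Otherwise
they lie on a line through `x`, and one more vertex strictly on each side of that line gives at
most four. In both cases `∑ wᵢ (zᵢ - x) = 0` with all `wᵢ > 0` and spanning `zᵢ - x`; then the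
linear map `ν ↦ ∑ νᵢ (zᵢ - x)` is open, and its values on small positive weights `ν`, translated
by `x`, fill a neighbourhood of `x` inside the convex hull.
-/

open Set

/-- The embedding of the lattice `ℤ²` into `ℝ²`. -/
def latticeEmbed (m : ℤ × ℤ) : ℝ × ℝ := ((m.1 : ℝ), (m.2 : ℝ))

/-- A convex integral polygon in `ℝ²`, recorded by a finite nonempty set of
integral points; its carrier is their convex hull. -/
structure ConvexIntegralPolygon where
  verts : Finset (ℤ × ℤ)
  nonempty : verts.Nonempty

namespace ConvexIntegralPolygon

/-- The underlying convex region in `ℝ²`. -/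
def carrier (P : ConvexIntegralPolygon) : Set (ℝ × ℝ) :=
  convexHull ℝ (latticeEmbed '' (P.verts : Set (ℤ × ℤ)))

/-- The lattice points in the topological interior of the polygon. -/
def interiorLatticePoints (P : ConvexIntegralPolygon) : Set (ℤ × ℤ) :=
  {m | latticeEmbed m ∈ interior P.carrier}

/-- The lattice points of the (closed) polygon. -/
def latticePoints (P : ConvexIntegralPolygon) : Set (ℤ × ℤ) :=
  {m | latticeEmbed m ∈ P.carrier}

/-- The number of edges of a polygon, i.e. the number of its vertices
(extreme points of the carrier). -/
noncomputable def numEdges (P : ConvexIntegralPolygon) : ℕ :=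
  (Set.extremePoints ℝ P.carrier).ncard

end ConvexIntegralPolygon

open Submodule Module

theorem exists_pos_sum_smul_eq_of_mem_span {𝕜 E ι : Type*} [Field 𝕜] [LinearOrder 𝕜]
    [IsStrictOrderedRing 𝕜] [AddCommGroup E] [Module 𝕜 E] [Fintype ι] {v : ι → E} {w : ι → 𝕜}
    (hw : ∀ i, 0 < w i) (hzero : ∑ i, w i • v i = 0) {y : E} (hy : y ∈ span 𝕜 (range v)) :
    ∃ c : ι → 𝕜, (∀ i, 0 < c i) ∧ ∑ i, c i • v i = y := by
  obtain ⟨c, rfl⟩ := (mem_span_range_iff_exists_fun 𝕜).1 hy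
  obtain ⟨K, hK⟩ := (finite_range fun i => -c i / w i).bddAbove
  refine ⟨c + (K + 1) • w, fun i => ?_, ?_⟩
  · have hcK : -c i ≤ K * w i := (div_le_iff₀ (hw i)).1 (hK (mem_range_self i))
    simp only [Pi.add_apply, Pi.smul_apply, smul_eq_mul]
    linarith [hw i]
  · simp only [Pi.add_apply, Pi.smul_apply, add_smul, Finset.sum_add_distrib, smul_eq_mul,
      mul_smul, ← Finset.smul_sum, hzero, smul_zero, add_zero]

theorem AffineIndependent.card_le_finrank_span_sub_add_one {k V ι : Type*} [DivisionRing k]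
    [AddCommGroup V] [Module k V] [Fintype ι] {z : ι → V} (hz : AffineIndependent k z) (x : V) :
    Fintype.card ι ≤ finrank k (span k (range fun i => z i - x)) + 1 := by
  have := FiniteDimensional.span_of_finite k (finite_range fun i => z i - x)
  refine hz.card_le_finrank_succ.trans (Nat.add_le_add_right (Submodule.finrank_mono ?_) 1)
  rw [vectorSpan_def, span_le]
  rintro _ ⟨_, ⟨i, rfl⟩, _, ⟨j, rfl⟩, rfl⟩
  change z i - z j ∈ _
  rw [← sub_sub_sub_cancel_right (z i) (z j) x]
  exact sub_mem (subset_span ⟨i, rfl⟩) (subset_span ⟨j, rfl⟩)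

section

variable {E : Type*} [NormedAddCommGroup E] [NormedSpace ℝ E]

theorem exists_lt_apply_of_mem_interior_convexHull {s : Set E} {x : E}
    (hx : x ∈ interior (convexHull ℝ s)) {f : E →L[ℝ] ℝ} (hf : f ≠ 0) : ∃ v ∈ s, f x < f v := by
  by_contra! h
  have hmax : IsLocalMax f x :=
    Filter.mem_of_superset (mem_interior_iff_mem_nhds.1 hx)
      (convexHull_min h ((convex_Iic (f x)).linear_preimage f.toLinearMap))
  exact hf (hmax.hasFDerivAt_eq_zero f.hasFDerivAt)

theorem Set.Finite.mem_convexHull_diff_singleton_of_mem_interior [Nontrivial E] {s : Set E}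
    (hs : s.Finite) {x : E} (hx : x ∈ interior (convexHull ℝ s)) :
    x ∈ convexHull ℝ (s \ {x}) := by
  have hext : (convexHull ℝ s).extremePoints ℝ ⊆ s \ {x} := fun y hy =>
    ⟨extremePoints_convexHull_subset hy, fun hyx =>
      (disjoint_interior_extremePoints _).notMem_of_mem_left hx (hyx ▸ hy)⟩
  have hx' := interior_subset hx
  rw [← closure_convexHull_extremePoints (hs.isCompact_convexHull (𝕜 := ℝ))
    (convex_convexHull ℝ s)] at hx'
  exact closure_minimal (convexHull_mono hext)
    (hs.sdiff.isCompact_convexHull (𝕜 := ℝ)).isClosed hx'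

theorem mem_interior_convexHull_of_sum_smul_sub_eq_zero [FiniteDimensional ℝ E] {ι : Type*}
    [Fintype ι] [Nonempty ι] {z : ι → E} {w : ι → ℝ} {x : E} (hw : ∀ i, 0 < w i)
    (hzero : ∑ i, w i • (z i - x) = 0) (hspan : span ℝ (range fun i => z i - x) = ⊤) :
    x ∈ interior (convexHull ℝ (range z)) := by
  set L := Fintype.linearCombination ℝ fun i => z i - x
  have hL : ∀ ν, L ν = ∑ i, ν i • (z i - x) := Fintype.linearCombination_apply ℝ _
  set U : Set (ι → ℝ) := univ.pi (fun _ => Ioi 0) ∩ {ν | ∑ i, ν i < 1}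
  have hU : IsOpen U := (isOpen_set_pi finite_univ fun _ _ => isOpen_Ioi).inter
    (isOpen_lt (continuous_finsetSum _ fun i _ => continuous_apply i) continuous_const)
  have hW : 0 < ∑ i, w i := Finset.sum_pos (fun i _ => hw i) Finset.univ_nonempty
  have hwz : ∑ i, w i • z i = (∑ i, w i) • x := by
    simpa [smul_sub, Finset.sum_sub_distrib, ← Finset.sum_smul, sub_eq_zero] using hzero
  -- shifting `ν` along `w` does not change `L ν`, and makes its weights sum to one
  have hUconv : (x + ·) '' (L '' U) ⊆ convexHull ℝ (range z) := by
    rintro _ ⟨_, ⟨ν, ⟨hν, hν1 : ∑ i, ν i < 1⟩, rfl⟩, rfl⟩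
    simp only [mem_univ_pi, mem_Ioi] at hν
    set t := (1 - ∑ i, ν i) / ∑ i, w i
    have ht : 0 ≤ t := div_nonneg (by linarith) hW.le
    have hsum : ∑ i, (ν i + t * w i) = 1 := by
      rw [Finset.sum_add_distrib, ← Finset.mul_sum, div_mul_cancel₀ _ hW.ne']
      ring
    have heq : x + L ν = ∑ i, (ν i + t * w i) • z i := by
      simp only [hL, smul_sub, add_smul, Finset.sum_add_distrib, Finset.sum_sub_distrib,
        mul_smul, ← Finset.smul_sum, hwz, ← Finset.sum_smul]
      rw [smul_smul, div_mul_cancel₀ _ hW.ne']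
      module
    change x + L ν ∈ _
    rw [heq]
    exact (convex_convexHull ℝ _).sum_mem (fun i _ => by nlinarith [hν i, hw i]) hsum
      (fun i _ => subset_convexHull ℝ _ (mem_range_self i))
  have hLsurj : Function.Surjective L := by
    rw [← LinearMap.range_eq_top, Fintype.range_linearCombination, hspan]
  refine mem_interior.2 ⟨_, hUconv,
    isOpenMap_add_left x _ (L.isOpenMap_of_finiteDimensional hLsurj _ hU), ?_⟩
  set c := (∑ i, w i + 1)⁻¹
  refine ⟨0, ⟨c • w, ⟨fun i _ => mul_pos (by positivity) (hw i), ?_⟩, ?_⟩, add_zero x⟩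
  · simp only [mem_ofPred_eq, Pi.smul_apply, smul_eq_mul, ← Finset.mul_sum, c]
    exact (inv_mul_lt_one₀ (by positivity)).2 (by linarith)
  · rw [map_smul, hL, hzero, smul_zero]

theorem exists_mem_interior_convexHull_sum_elim_of_span_ne_top (hE : finrank ℝ E = 2)
    {s : Set E} {x : E} (hx : x ∈ interior (convexHull ℝ s)) {ι : Type*} [Fintype ι]
    {z : ι → E} {w : ι → ℝ} (hw : ∀ i, 0 < w i) (hzero : ∑ i, w i • (z i - x) = 0)
    (hbot : span ℝ (range fun i => z i - x) ≠ ⊥) (htop : span ℝ (range fun i => z i - x) ≠ ⊤) :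
    ∃ r ∈ s, ∃ q ∈ s, x ∈ interior (convexHull ℝ (range (Sum.elim z ![r, q]))) := by
  have : FiniteDimensional ℝ E := Module.finite_of_finrank_eq_succ hE
  set W := span ℝ (range fun i => z i - x)
  obtain ⟨f, hf, hWf⟩ := exists_dual_map_eq_bot_of_lt_top htop.lt_top inferInstance
  have hker : IsCoatom (LinearMap.ker f) :=
    LinearMap.isCoatom_ker_of_surjective (LinearMap.surjective_of_ne_zero hf)
  -- in the plane, a nonzero subspace inside the kernel of a nonzero functional is that kernel
  have hWker : W = LinearMap.ker f := by
    refine eq_of_le_of_finrank_le (LinearMap.le_ker_iff_map.2 hWf) ?_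
    have := Submodule.finrank_lt hker.1
    have := (Submodule.finrank_eq_zero (S := W)).not.2 hbot
    omega
  set F := LinearMap.toContinuousLinearMap f
  have hF : F ≠ 0 := by simpa [F] using hf
  obtain ⟨r, hr, hxr⟩ := exists_lt_apply_of_mem_interior_convexHull hx hF
  obtain ⟨q, hq, hxq⟩ := exists_lt_apply_of_mem_interior_convexHull hx (neg_ne_zero.2 hF)
  simp only [_root_.neg_apply, neg_lt_neg_iff, F,
    LinearMap.coe_toContinuousLinearMap'] at hxr hxq
  have hy : -((f x - f q) • (r - x) + (f r - f x) • (q - x)) ∈ W := by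
    rw [hWker, LinearMap.mem_ker]
    simp only [map_neg, map_add, map_smul, map_sub, smul_eq_mul]
    ring
  obtain ⟨c, hc, hcy⟩ := exists_pos_sum_smul_eq_of_mem_span hw hzero hy
  refine ⟨r, hr, q, hq, mem_interior_convexHull_of_sum_smul_sub_eq_zero
    (w := Sum.elim c ![f x - f q, f r - f x]) ?_ ?_ ?_⟩
  · rintro (i | i)
    · exact hc i
    · fin_cases i <;> simp <;> linarith
  · simp [Fintype.sum_sum_type, Fin.sum_univ_two, hcy]
  · refine hker.lt_iff.1 (SetLike.lt_iff_le_and_exists.2 ⟨?_, r - x, ?_, ?_⟩)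
    · rw [← hWker]
      exact span_mono (range_subset_iff.2 fun i => ⟨Sum.inl i, rfl⟩)
    · exact subset_span ⟨Sum.inr 0, rfl⟩
    · simp only [LinearMap.mem_ker, map_sub]
      linarith

theorem exists_subset_card_le_four_mem_interior_convexHull (hE : finrank ℝ E = 2)
    {s : Finset E} {x : E} (hx : x ∈ interior (convexHull ℝ (s : Set E))) :
    ∃ t ⊆ s, t.card ≤ 4 ∧ x ∈ interior (convexHull ℝ (t : Set E)) := by
  classical
  have : FiniteDimensional ℝ E := Module.finite_of_finrank_eq_succ hE
  have : Nontrivial E := Module.nontrivial_of_finrank_eq_succ hE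
  obtain ⟨ι, _, z, w, hzs, hind, hw, hw1, hwx⟩ := eq_pos_convex_span_of_mem_convexHull
    (s.finite_toSet.mem_convexHull_diff_singleton_of_mem_interior hx)
  have hzero : ∑ i, w i • (z i - x) = 0 := by
    simp [smul_sub, Finset.sum_sub_distrib, hwx, ← Finset.sum_smul, hw1]
  have : Nonempty ι :=
    Finset.univ_nonempty_iff.1 (Finset.nonempty_of_sum_ne_zero (hw1 ▸ one_ne_zero))
  have hcard := hind.card_le_finrank_span_sub_add_one x
  obtain ⟨κ, _, z', hz's, hκ, hint⟩ : ∃ (κ : Type _) (_ : Fintype κ) (z' : κ → E),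
      range z' ⊆ s ∧ Fintype.card κ ≤ 4 ∧ x ∈ interior (convexHull ℝ (range z')) := by
    by_cases htop : span ℝ (range fun i => z i - x) = ⊤
    · refine ⟨ι, inferInstance, z, hzs.trans sdiff_subset, ?_,
        mem_interior_convexHull_of_sum_smul_sub_eq_zero hw hzero htop⟩
      rw [htop, finrank_top, hE] at hcard
      omega
    · have hbot : span ℝ (range fun i => z i - x) ≠ ⊥ := by
        obtain ⟨i⟩ := ‹Nonempty ι›
        exact (Submodule.ne_bot_iff _).2
          ⟨_, subset_span ⟨i, rfl⟩, sub_ne_zero.2 (hzs ⟨i, rfl⟩).2⟩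
      obtain ⟨r, hr, q, hq, hint⟩ :=
        exists_mem_interior_convexHull_sum_elim_of_span_ne_top hE hx hw hzero hbot htop
      refine ⟨ι ⊕ Fin 2, inferInstance, _, ?_, ?_, hint⟩
      · rintro _ ⟨j | j, rfl⟩
        · exact (hzs ⟨j, rfl⟩).1
        · fin_cases j <;> simpa
      · have := Submodule.finrank_lt htop
        rw [Fintype.card_sum, Fintype.card_fin]
        omega
  exact ⟨Finset.univ.image z', by simpa [← Finset.coe_subset] using hz's,
    Finset.card_image_le.trans hκ, by simpa using hint⟩

end

theorem latticeEmbed_injective : Function.Injective latticeEmbed := fun m n h => by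
  simp only [latticeEmbed, Prod.mk.injEq, Int.cast_inj] at h
  exact Prod.ext h.1 h.2

theorem ConvexIntegralPolygon.numEdges_le_card_verts (P : ConvexIntegralPolygon) :
    P.numEdges ≤ P.verts.card :=
  calc P.numEdges ≤ (latticeEmbed '' (P.verts : Set (ℤ × ℤ))).ncard :=
        ncard_le_ncard extremePoints_convexHull_subset (P.verts.finite_toSet.image _)
    _ ≤ P.verts.card := ncard_coe_finset P.verts ▸ ncard_image_le P.verts.finite_toSet

open ConvexIntegralPolygon in
/-- Every convex integral polygon in `ℝ²` containing a lattice point in its interior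
contains a convex integral subpolygon with an interior lattice point and at most
four edges. -/
theorem stmt0 (P : ConvexIntegralPolygon) (h : P.interiorLatticePoints.Nonempty) :
    ∃ Q : ConvexIntegralPolygon, Q.carrier ⊆ P.carrier ∧
      Q.interiorLatticePoints.Nonempty ∧ Q.numEdges ≤ 4 := by
  classical
  obtain ⟨m, hm⟩ := h
  obtain ⟨t, hts, ht4, hint⟩ := exists_subset_card_le_four_mem_interior_convexHull
    (s := P.verts.image latticeEmbed) (by simp) (by rwa [Finset.coe_image])
  obtain ⟨T, hTP, rfl⟩ := Finset.subset_image_iff.1 hts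
  rw [Finset.coe_image] at hint
  have hT : T.Nonempty := Finset.nonempty_iff_ne_empty.2 (by rintro rfl; simp at hint)
  refine ⟨⟨T, hT⟩, convexHull_mono (image_mono (Finset.coe_subset.2 hTP)), ⟨m, hint⟩, ?_⟩
  rw [Finset.card_image_of_injective T latticeEmbed_injective] at ht4
  exact (numEdges_le_card_verts _).trans ht4
end

section
/- Let P be a building block polygon (a convex integral polygon in ℝ² with exactly one interior lattice point and at most five lattice points), and let n+1 be the number of lattice points of P. Then, for each of the four building block polygons P, there is no lattice segment s (of positive length) and set of n−1 distinct lattice points x₁,…,x_{n−1} such that every translated segment xᵢ + s is contained in P. -/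
open Set

open ConvexIntegralPolygon in
lemma keyAux (P : ConvexIntegralPolygon) (M : ℤ × ℤ) (α β : ℝ)
    (hM : M ∈ P.interiorLatticePoints) (hw : α ≠ 0 ∨ β ≠ 0)
    (h : ∀ p ∈ P.latticePoints,
      α * (M.1 : ℝ) + β * (M.2 : ℝ) ≤ α * (p.1 : ℝ) + β * (p.2 : ℝ)) : False := by
  set c : ℝ := α * (M.1 : ℝ) + β * (M.2 : ℝ) with hc
  have hlin : IsLinearMap ℝ (fun z : ℝ × ℝ => α * z.1 + β * z.2) := by
    constructor
    · intro x y; simp only [Prod.fst_add, Prod.snd_add]; ring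
    · intro t x; simp only [Prod.smul_fst, Prod.smul_snd, smul_eq_mul]; ring
  have hconv : P.carrier ⊆ {z : ℝ × ℝ | c ≤ α * z.1 + β * z.2} := by
    apply convexHull_min
    · rintro z ⟨p, hp, rfl⟩
      have hpL : p ∈ P.latticePoints :=
        subset_convexHull ℝ _ ⟨p, hp, rfl⟩
      simpa [latticeEmbed] using h p hpL
    · exact convex_halfSpace_ge hlin c
  have hMi : latticeEmbed M ∈ interior P.carrier := hM
  rw [mem_interior_iff_mem_nhds, Metric.mem_nhds_iff] at hMi
  obtain ⟨ε, εpos, hball⟩ := hMi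
  set w : ℝ × ℝ := (α, β) with hwdef
  have hwne : w ≠ 0 := by
    intro h0
    rcases hw with h1 | h1
    · exact h1 (congrArg Prod.fst h0)
    · exact h1 (congrArg Prod.snd h0)
  have hwnorm : 0 < ‖w‖ := norm_pos_iff.mpr hwne
  set δ : ℝ := ε / (2 * ‖w‖) with hδdef
  have hδ : 0 < δ := by positivity
  have hz : latticeEmbed M - δ • w ∈ Metric.ball (latticeEmbed M) ε := by
    rw [Metric.mem_ball, dist_eq_norm, sub_sub_cancel_left, norm_neg, norm_smul,
      Real.norm_eq_abs, abs_of_pos hδ, hδdef, mul_comm]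
    have heq : ‖w‖ * (ε / (2 * ‖w‖)) = ε / 2 := by
      field_simp
    rw [heq]
    linarith
  have hzc : latticeEmbed M - δ • w ∈ P.carrier := hball hz
  have hineq := hconv hzc
  simp only [mem_setOf_eq] at hineq
  have hfst : (latticeEmbed M - δ • w).1 = (M.1 : ℝ) - δ * α := by
    simp [latticeEmbed, hwdef]
  have hsnd : (latticeEmbed M - δ • w).2 = (M.2 : ℝ) - δ * β := by
    simp [latticeEmbed, hwdef]
  rw [hfst, hsnd] at hineq
  have hαβ : 0 < α ^ 2 + β ^ 2 := by
    rcases hw with h1 | h1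
    · have := pow_two_pos_of_ne_zero h1
      nlinarith [sq_nonneg β]
    · have := pow_two_pos_of_ne_zero h1
      nlinarith [sq_nonneg α]
  nlinarith [hineq, hδ, hαβ]

open ConvexIntegralPolygon in
/-- Let `P` be a building block polygon (exactly one interior lattice point, at most
five lattice points) with `n + 1` lattice points.  Then there is no lattice segment
`s` of positive length together with `n − 1` distinct lattice points `x₁, …, x_{n−1}`
such that every translate `xᵢ + s` is contained in `P`.  (This is the combinatorial
fact, via Ostrowski's theorem on Newton polygons of products, underlying the proof
that the toric surface of a building block polygon carries no line through the
identity of the torus.) -/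
theorem stmt12 (P : ConvexIntegralPolygon) (n : ℕ)
    (hbb : P.interiorLatticePoints.ncard = 1 ∧ P.latticePoints.ncard ≤ 5)
    (hn : P.latticePoints.ncard = n + 1) :
    ¬ ∃ (a b : ℤ × ℤ), a ≠ b ∧ ∃ xs : Finset (ℤ × ℤ), xs.card = n - 1 ∧
      ∀ x ∈ xs, (fun p => latticeEmbed x + p) '' segment ℝ (latticeEmbed a) (latticeEmbed b)
        ⊆ P.carrier := by
  rintro ⟨a, b, hab, xs, hxscard, hxs⟩
  obtain ⟨hint, -⟩ := hbb
  obtain ⟨M, hMeq⟩ := Set.ncard_eq_one.mp hint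
  have hM : M ∈ P.interiorLatticePoints := by rw [hMeq]; exact mem_singleton M
  have hMlat : M ∈ P.latticePoints := by
    show latticeEmbed M ∈ P.carrier
    exact interior_subset hM
  -- finiteness of lattice points
  have hLfin : P.latticePoints.Finite := by
    by_contra hinf
    rw [Set.Infinite.ncard hinf] at hn
    omega
  set Lf : Finset (ℤ × ℤ) := hLfin.toFinset with hLfdef
  have hmemLf : ∀ p, p ∈ Lf ↔ p ∈ P.latticePoints := fun p => hLfin.mem_toFinset
  have hLfcard : Lf.card = n + 1 := by
    rw [← hn, Set.ncard_eq_toFinset_card _ hLfin]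
  set v : ℤ × ℤ := b - a with hvdef
  have hvne : v ≠ 0 := sub_ne_zero.mpr (Ne.symm hab)
  -- translated lattice points
  have hembadd : ∀ x y : ℤ × ℤ, latticeEmbed (x + y) = latticeEmbed x + latticeEmbed y := by
    intro x y
    simp [latticeEmbed, Prod.ext_iff]
  have hseg : ∀ x ∈ xs, (x + a) ∈ P.latticePoints ∧ (x + b) ∈ P.latticePoints := by
    intro x hx
    have h1 := hxs x hx
    constructor
    · have hmem : latticeEmbed x + latticeEmbed a ∈ P.carrier :=
        h1 ⟨latticeEmbed a, left_mem_segment ℝ _ _, rfl⟩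
      show latticeEmbed (x + a) ∈ P.carrier
      rw [hembadd]; exact hmem
    · have hmem : latticeEmbed x + latticeEmbed b ∈ P.carrier :=
        h1 ⟨latticeEmbed b, right_mem_segment ℝ _ _, rfl⟩
      show latticeEmbed (x + b) ∈ P.carrier
      rw [hembadd]; exact hmem
  set S : Finset (ℤ × ℤ) := xs.image (· + a) with hSdef
  have hScard : S.card = n - 1 := by
    rw [hSdef, Finset.card_image_of_injective _ (add_left_injective a), hxscard]
  have hSsub : S ⊆ Lf := by
    intro p hp
    obtain ⟨x, hx, rfl⟩ := Finset.mem_image.mp hp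
    exact (hmemLf _).mpr (hseg x hx).1
  set F : Finset (ℤ × ℤ) := S.image (· + v) with hFdef
  have hFcard : F.card = n - 1 := by
    rw [hFdef, Finset.card_image_of_injective _ (add_left_injective v), hScard]
  have hFsub : F ⊆ Lf := by
    intro p hp
    obtain ⟨s, hs, rfl⟩ := Finset.mem_image.mp hp
    obtain ⟨x, hx, rfl⟩ := Finset.mem_image.mp hs
    have : x + a + v = x + b := by rw [hvdef]; abel
    rw [this]
    exact (hmemLf _).mpr (hseg x hx).2
  set T : Finset (ℤ × ℤ) := Lf \ F with hTdef
  have hTcard : T.card ≤ 2 := by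
    rw [hTdef, Finset.card_sdiff_of_subset hFsub, hLfcard, hFcard]
    omega
  -- the linear functional with kernel v, and the dot product with v
  set uz : ℤ × ℤ → ℤ := fun p => v.2 * p.1 - v.1 * p.2 with huzdef
  set dv : ℤ × ℤ → ℤ := fun p => v.1 * p.1 + v.2 * p.2 with hdvdef
  have hvcomp : v.1 ≠ 0 ∨ v.2 ≠ 0 := by
    by_contra hc
    push_neg at hc
    exact hvne (Prod.ext_iff.mpr ⟨hc.1, hc.2⟩)
  have hvpos : 0 < v.1 ^ 2 + v.2 ^ 2 := by
    rcases hvcomp with h1 | h1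
    · nlinarith [pow_two_pos_of_ne_zero h1, sq_nonneg v.2]
    · nlinarith [pow_two_pos_of_ne_zero h1, sq_nonneg v.1]
  -- every fiber of uz on Lf contains a point of T
  have hfiber : ∀ p ∈ Lf, ∃ q ∈ T, uz q = uz p := by
    intro p hp
    have hne : (Lf.filter (fun q => uz q = uz p)).Nonempty :=
      ⟨p, Finset.mem_filter.mpr ⟨hp, rfl⟩⟩
    obtain ⟨q, hqmem, hqmin⟩ := Finset.exists_min_image _ dv hne
    obtain ⟨hqLf, hquz⟩ := Finset.mem_filter.mp hqmem
    refine ⟨q, ?_, hquz⟩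
    rw [hTdef, Finset.mem_sdiff]
    refine ⟨hqLf, fun hqF => ?_⟩
    rw [hFdef] at hqF
    obtain ⟨s, hsS, rfl⟩ := Finset.mem_image.mp hqF
    have hsuz : uz s = uz p := by
      have huzs : uz (s + v) = uz s := by
        simp only [huzdef, Prod.fst_add, Prod.snd_add]
        ring
      rw [← hquz, huzs]
    have hsfil : s ∈ Lf.filter (fun q => uz q = uz p) :=
      Finset.mem_filter.mpr ⟨hSsub hsS, hsuz⟩
    have hle := hqmin s hsfil
    have hdveq : dv (s + v) = dv s + (v.1 ^ 2 + v.2 ^ 2) := by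
      simp only [hdvdef, Prod.fst_add, Prod.snd_add]
      ring
    rw [hdveq] at hle
    linarith
  have hMLf : M ∈ Lf := (hmemLf M).mpr hMlat
  -- cast facts
  have hcast : ∀ p q : ℤ × ℤ, uz p ≤ uz q ↔
      (v.2 : ℝ) * (p.1 : ℝ) + (-(v.1 : ℝ)) * (p.2 : ℝ) ≤
      (v.2 : ℝ) * (q.1 : ℝ) + (-(v.1 : ℝ)) * (q.2 : ℝ) := by
    intro p q
    rw [show ((v.2 : ℝ) * (p.1 : ℝ) + (-(v.1 : ℝ)) * (p.2 : ℝ)) = ((uz p : ℤ) : ℝ) by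
        simp [huzdef]; ring,
      show ((v.2 : ℝ) * (q.1 : ℝ) + (-(v.1 : ℝ)) * (q.2 : ℝ)) = ((uz q : ℤ) : ℝ) by
        simp [huzdef]; ring]
    exact_mod_cast Iff.rfl
  have hwne1 : (v.2 : ℝ) ≠ 0 ∨ (-(v.1 : ℝ)) ≠ 0 := by
    rcases hvcomp with h1 | h1
    · right; simpa using h1
    · left; exact_mod_cast h1
  by_cases hcase : ∀ p ∈ P.latticePoints, uz M ≤ uz p
  · exact keyAux P M (v.2 : ℝ) (-(v.1 : ℝ)) hM hwne1
      (fun p hp => (hcast M p).mp (hcase p hp))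
  · push_neg at hcase
    obtain ⟨p₀, hp₀L, hp₀lt⟩ := hcase
    have hall : ∀ p ∈ P.latticePoints, uz p ≤ uz M := by
      intro p hpL
      by_contra hlt
      push_neg at hlt
      obtain ⟨q1, hq1T, hq1⟩ := hfiber p ((hmemLf p).mpr hpL)
      obtain ⟨q2, hq2T, hq2⟩ := hfiber M hMLf
      obtain ⟨q3, hq3T, hq3⟩ := hfiber p₀ ((hmemLf p₀).mpr hp₀L)
      have h12 : q1 ≠ q2 := fun h => by rw [h, hq2] at hq1; omega
      have h13 : q1 ≠ q3 := fun h => by rw [h, hq3] at hq1; omega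
      have h23 : q2 ≠ q3 := fun h => by rw [h, hq3] at hq2; omega
      have hsub3 : ({q1, q2, q3} : Finset (ℤ × ℤ)) ⊆ T := by
        intro t ht
        simp only [Finset.mem_insert, Finset.mem_singleton] at ht
        rcases ht with rfl | rfl | rfl
        · exact hq1T
        · exact hq2T
        · exact hq3T
      have h3card : ({q1, q2, q3} : Finset (ℤ × ℤ)).card = 3 := by
        rw [Finset.card_insert_of_notMem (by simp [h12, h13]),
          Finset.card_insert_of_notMem (by simp [h23]), Finset.card_singleton]
      have := Finset.card_le_card hsub3
      omega
    exact keyAux P M (-(v.2 : ℝ)) ((v.1 : ℝ)) hM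
      (by rcases hvcomp with h1 | h1
          · right; exact_mod_cast h1
          · left; simpa using h1)
      (by intro p hp
          have h1 := (hcast p M).mp (hall p hp)
          linarith)
end
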